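/- arXiv:1803.02052 — 5 statements merged into one kernel-verified Lean document; each statement's English description precedes it below -/
import Mathlib

section
/- Let T : C → C be a (k, {λₙ}, {μₙ}, ξ)-total asymptotically strict pseudo contraction with fixed point p. Then for each x ∈ C and n ≥ 1: ⟨x - Tⁿx, x - p⟩ ≥ ((1-k)/2)‖x - Tⁿx‖² - (λₙ/2)ξ(‖x - p‖) - μₙ/2. -/
open RealInnerProductSpace

theorem taspc_fixed_point_ineq_two
    (H : Type*) [NormedAddCommGroup H] [InnerProductSpace ℝ H] [CompleteSpace H]
    (C : Set H) (hC : C.Nonempty) (T : H → H) (hTC : Set.MapsTo T C C)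
    (k : ℝ) (hk0 : 0 ≤ k) (hk1 : k < 1)
    (lam mu : ℕ → ℝ) (hlam : ∀ n, 0 ≤ lam n) (hmu : ∀ n, 0 ≤ mu n)
    (ξ : ℝ → ℝ) (hξmono : StrictMonoOn ξ (Set.Ici 0))
    (hξcont : ContinuousOn ξ (Set.Ici 0)) (hξ0 : ξ 0 = 0)
    (hξnonneg : ∀ t, 0 ≤ t → 0 ≤ ξ t)
    (hT : ∀ n : ℕ, ∀ x ∈ C, ∀ y ∈ C,
      ‖T^[n] x - T^[n] y‖ ^ 2 ≤ ‖x - y‖ ^ 2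
        + k * ‖(x - T^[n] x) - (y - T^[n] y)‖ ^ 2
        + lam n * ξ ‖x - y‖ + mu n)
    (p : H) (hpC : p ∈ C) (hp : T p = p) :
    ∀ x ∈ C, ∀ n : ℕ, 1 ≤ n →
      ⟪x - T^[n] x, x - p⟫ ≥ ((1 - k) / 2) * ‖x - T^[n] x‖ ^ 2
        - (lam n / 2) * ξ ‖x - p‖ - mu n / 2 := by
  intro x hx n hn
  have hpfix : T^[n] p = p := Function.iterate_fixed hp n
  have h := hT n x hx p hpC
  rw [hpfix] at h
  have hsub : (p : H) - p = 0 := sub_self p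
  rw [hsub, sub_zero] at h
  have hexp : ‖T^[n] x - p‖ ^ 2
      = ‖x - p‖ ^ 2 - 2 * ⟪x - T^[n] x, x - p⟫ + ‖x - T^[n] x‖ ^ 2 := by
    have : T^[n] x - p = (x - p) - (x - T^[n] x) := by abel
    rw [this, @norm_sub_sq_real, real_inner_comm]
  rw [hexp] at h
  nlinarith [h]
end

section
/- Under the Blum–Oettli conditions on the bifunction f and for r > 0, the resolvent T_r f is firmly nonexpansive: ‖T_r f x - T_r f y‖² ≤ ⟨T_r f x - T_r f y, x - y⟩ for all x, y ∈ H. -/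
open RealInnerProductSpace Filter

theorem resolvent_firmly_nonexpansive
    (H : Type*) [NormedAddCommGroup H] [InnerProductSpace ℝ H] [CompleteSpace H]
    (C : Set H) (hC : C.Nonempty) (hCcl : IsClosed C) (hCcv : Convex ℝ C)
    (f : H → H → ℝ)
    (hf1 : ∀ x ∈ C, f x x = 0)
    (hf2 : ∀ x ∈ C, ∀ y ∈ C, f x y + f y x ≤ 0)
    (hf3 : ∀ x ∈ C, ∀ y ∈ C, ∀ z ∈ C,
      Filter.limsup (fun t : ℝ => f (t • z + (1 - t) • x) y)
        (nhdsWithin 0 (Set.Ioi 0)) ≤ f x y)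
    (hf4 : ∀ x ∈ C, ConvexOn ℝ C (f x) ∧ LowerSemicontinuousOn (f x) C)
    (r : ℝ) (hr : 0 < r)
    (Tr : H → H) (hTrC : ∀ x, Tr x ∈ C)
    (hTr : ∀ x : H, ∀ y ∈ C, f (Tr x) y + (1 / r) * ⟪y - Tr x, Tr x - x⟫ ≥ 0) :
    ∀ x y : H, ‖Tr x - Tr y‖ ^ 2 ≤ ⟪Tr x - Tr y, x - y⟫ := by
  intro x y
  have h1 := hTr x (Tr y) (hTrC y)
  have h2 := hTr y (Tr x) (hTrC x)
  have h3 := hf2 (Tr x) (hTrC x) (Tr y) (hTrC y)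
  have hsum : 0 ≤ (1 / r) * (⟪Tr y - Tr x, Tr x - x⟫ + ⟪Tr x - Tr y, Tr y - y⟫) := by
    nlinarith [h1, h2, h3]
  have hpos : (0:ℝ) < 1 / r := by positivity
  have hin : 0 ≤ ⟪Tr y - Tr x, Tr x - x⟫ + ⟪Tr x - Tr y, Tr y - y⟫ :=
    nonneg_of_mul_nonneg_right hsum hpos
  have hexp : ⟪Tr y - Tr x, Tr x - x⟫ + ⟪Tr x - Tr y, Tr y - y⟫
      = ⟪Tr x - Tr y, x - y⟫ - ‖Tr x - Tr y‖ ^ 2 := by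
    rw [← real_inner_self_eq_norm_sq]
    simp only [inner_sub_left, inner_sub_right]
    ring
  linarith [hexp ▸ hin]
end

section
/- Under the Blum–Oettli conditions, the fixed point set of the resolvent T_r f equals the solution set EP(f) = {x ∈ C : f(x,y) ≥ 0 for all y ∈ C}, and EP(f) is closed and convex. -/
open RealInnerProductSpace Filter

theorem resolvent_fixed_points_eq_EP
    (H : Type*) [NormedAddCommGroup H] [InnerProductSpace ℝ H] [CompleteSpace H]
    (C : Set H) (hC : C.Nonempty) (hCcl : IsClosed C) (hCcv : Convex ℝ C)
    (f : H → H → ℝ)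
    (hf1 : ∀ x ∈ C, f x x = 0)
    (hf2 : ∀ x ∈ C, ∀ y ∈ C, f x y + f y x ≤ 0)
    (hf3 : ∀ x ∈ C, ∀ y ∈ C, ∀ z ∈ C,
      Filter.limsup (fun t : ℝ => f (t • z + (1 - t) • x) y)
        (nhdsWithin 0 (Set.Ioi 0)) ≤ f x y)
    (hf4 : ∀ x ∈ C, ConvexOn ℝ C (f x) ∧ LowerSemicontinuousOn (f x) C)
    (r : ℝ) (hr : 0 < r)
    (Tr : H → H) (hTrC : ∀ x, Tr x ∈ C)
    (hTr : ∀ x : H, ∀ y ∈ C, f (Tr x) y + (1 / r) * ⟪y - Tr x, Tr x - x⟫ ≥ 0) :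
    ({x : H | Tr x = x} = {x ∈ C | ∀ y ∈ C, f x y ≥ 0})
      ∧ IsClosed {x ∈ C | ∀ y ∈ C, f x y ≥ 0}
      ∧ Convex ℝ {x ∈ C | ∀ y ∈ C, f x y ≥ 0} := by
  -- Minty-type characterization of EP(f)
  have key : {x ∈ C | ∀ y ∈ C, f x y ≥ 0} = {x ∈ C | ∀ y ∈ C, f y x ≤ 0} := by
    ext x
    simp only [Set.mem_setOf_eq]
    constructor
    · rintro ⟨hx, h⟩
      refine ⟨hx, fun y hy => ?_⟩
      have := hf2 x hx y hy
      have := h y hy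
      linarith
    · rintro ⟨hx, h⟩
      refine ⟨hx, fun y hy => ?_⟩
      set u : ℝ → ℝ := fun t => f (t • y + (1 - t) • x) y with hu
      have hev : ∀ᶠ t in nhdsWithin (0:ℝ) (Set.Ioi 0), 0 ≤ u t := by
        have hmem : Set.Ioo (0:ℝ) 1 ∈ nhdsWithin (0:ℝ) (Set.Ioi 0) :=
          Ioo_mem_nhdsGT_of_mem (by simp : (0:ℝ) ∈ Set.Ico (0:ℝ) 1)
        filter_upwards [hmem] with t ht
        have ht0 : (0:ℝ) ≤ t := ht.1.le
        have ht1 : (0:ℝ) ≤ 1 - t := by linarith [ht.2]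
        have hxtC : t • y + (1 - t) • x ∈ C := hCcv hy hx ht0 ht1 (by ring)
        have hconv := (hf4 _ hxtC).1.2 hy hx ht0 ht1 (by ring)
        have hzero : f (t • y + (1 - t) • x) (t • y + (1 - t) • x) = 0 :=
          hf1 _ hxtC
        rw [hzero] at hconv
        have hle : f (t • y + (1 - t) • x) x ≤ 0 := h _ hxtC
        simp only [smul_eq_mul] at hconv
        have : 0 ≤ t * f (t • y + (1 - t) • x) y := by nlinarith
        have ht0' : (0:ℝ) < t := ht.1
        simp only [hu]
        nlinarith
      have hls := hf3 x hx y hy y hy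
      by_cases hb : IsBoundedUnder (· ≤ ·) (nhdsWithin (0:ℝ) (Set.Ioi 0)) u
      · have h0 : (0:ℝ) ≤ limsup u (nhdsWithin (0:ℝ) (Set.Ioi 0)) :=
          le_limsup_of_frequently_le hev.frequently hb
        exact le_trans h0 hls
      · have hempty : {a : ℝ | ∀ᶠ t in nhdsWithin (0:ℝ) (Set.Ioi 0), u t ≤ a} = ∅ := by
          rw [Set.eq_empty_iff_forall_notMem]
          intro a ha
          exact hb ⟨a, ha⟩
        have : limsup u (nhdsWithin (0:ℝ) (Set.Ioi 0)) = 0 := by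
          rw [Filter.limsup_eq, hempty, Real.sInf_empty]
        rw [this] at hls
        exact hls
  -- fixed point set equality
  have hfix : {x : H | Tr x = x} = {x ∈ C | ∀ y ∈ C, f x y ≥ 0} := by
    ext x
    simp only [Set.mem_setOf_eq]
    constructor
    · intro hx
      have hxC : x ∈ C := hx ▸ hTrC x
      refine ⟨hxC, fun y hy => ?_⟩
      have := hTr x y hy
      rw [hx] at this
      simp only [sub_self, inner_zero_right, mul_zero, add_zero] at this
      exact this
    · rintro ⟨hxC, h⟩
      have h1 := hTr x x hxC
      have hiz : ⟪x - Tr x, Tr x - x⟫ = -‖x - Tr x‖^2 := by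
        rw [← neg_sub x (Tr x), inner_neg_right, real_inner_self_eq_norm_sq]
      rw [hiz] at h1
      have h2 := hf2 x hxC (Tr x) (hTrC x)
      have h3 := h (Tr x) (hTrC x)
      have hr' : 0 < 1 / r := by positivity
      have hnorm : ‖x - Tr x‖^2 ≤ 0 := by nlinarith [sq_nonneg ‖x - Tr x‖]
      have : ‖x - Tr x‖^2 = 0 := le_antisymm hnorm (sq_nonneg _)
      have : x - Tr x = 0 := by
        rwa [pow_eq_zero_iff (two_ne_zero), norm_eq_zero] at this
      have := sub_eq_zero.mp this
      exact this.symm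
  refine ⟨hfix, ?_, ?_⟩
  · -- closedness
    rw [key]
    have : {x ∈ C | ∀ y ∈ C, f y x ≤ 0} = ⋂ y ∈ C, {x ∈ C | f y x ≤ 0} := by
      ext x
      simp only [Set.mem_setOf_eq, Set.mem_iInter]
      constructor
      · rintro ⟨hx, h⟩ y hy
        exact ⟨hx, h y hy⟩
      · intro h
        obtain ⟨c, hc⟩ := hC
        exact ⟨(h c hc).1, fun y hy => (h y hy).2⟩
    rw [this]
    refine isClosed_biInter fun y hy => ?_
    apply IsSeqClosed.isClosed
    intro u x hu hux
    have hxC : x ∈ C := hCcl.mem_of_tendsto hux (Eventually.of_forall fun n => (hu n).1)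
    refine ⟨hxC, ?_⟩
    by_contra hpos
    push_neg at hpos
    have hlsc := (hf4 y hy).2 x hxC 0 hpos
    have htend : Tendsto u atTop (nhdsWithin x C) := by
      rw [tendsto_nhdsWithin_iff]
      exact ⟨hux, Eventually.of_forall fun n => (hu n).1⟩
    have := (htend.eventually hlsc).exists
    obtain ⟨n, hn⟩ := this
    exact absurd (hu n).2 (not_le.mpr hn)
  · -- convexity
    rw [key]
    intro x hx x' hx' a b ha hb hab
    refine ⟨hCcv hx.1 hx'.1 ha hb hab, fun y hy => ?_⟩
    have := (hf4 y hy).1.2 hx.1 hx'.1 ha hb hab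
    simp only [smul_eq_mul] at this
    have h1 := hx.2 y hy
    have h2 := hx'.2 y hy
    nlinarith
end

section
/- Let A : H₁ → H₂ be a bounded linear operator with ‖A*A‖ ≤ L, T : H₂ → H₂ a firmly nonexpansive mapping with Tq = Aq where q = Ap, and 0 < γ < 1/L. Then for any firmly nonexpansive U : H₁ → H₁ with Up = p, the point u = U(x - γA*(I - T)Ax) satisfies ‖u - p‖² ≤ ‖x - p‖² + γ(Lγ - 1)‖Ax - TAx‖², and in particular ‖u - p‖ ≤ ‖x - p‖. -/
open RealInnerProductSpace

theorem split_step_contraction_estimate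
    (H₁ H₂ : Type*) [NormedAddCommGroup H₁] [InnerProductSpace ℝ H₁] [CompleteSpace H₁]
    [NormedAddCommGroup H₂] [InnerProductSpace ℝ H₂] [CompleteSpace H₂]
    (A : H₁ →L[ℝ] H₂) (L : ℝ) (hL : ‖A.adjoint.comp A‖ ≤ L)
    (γ : ℝ) (hγ0 : 0 < γ) (hγ1 : γ < 1 / L)
    (T : H₂ → H₂)
    (hT : ∀ u v : H₂, ‖T u - T v‖ ^ 2 ≤ ⟪u - v, T u - T v⟫)
    (U : H₁ → H₁)
    (hU : ∀ u v : H₁, ‖U u - U v‖ ^ 2 ≤ ⟪u - v, U u - U v⟫)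
    (p : H₁) (hUp : U p = p) (hTp : T (A p) = A p)
    (x : H₁) (u : H₁) (hu : u = U (x - γ • A.adjoint (A x - T (A x)))) :
    ‖u - p‖ ^ 2 ≤ ‖x - p‖ ^ 2 + γ * (L * γ - 1) * ‖A x - T (A x)‖ ^ 2
      ∧ ‖u - p‖ ≤ ‖x - p‖ := by
  have hL0 : 0 < L := by
    by_contra h
    push_neg at h
    have : 1 / L ≤ 0 := div_nonpos_of_nonneg_of_nonpos zero_le_one h
    linarith
  set w : H₂ := A x - T (A x) with hw
  set y : H₁ := x - γ • A.adjoint w with hy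
  clear_value y
  clear_value w
  -- u = U y, and ‖u - p‖ ≤ ‖y - p‖ by firm nonexpansiveness of U
  have hUne : ‖u - p‖ ≤ ‖y - p‖ := by
    have h1 := hU y p
    rw [hUp] at h1
    have h2 : ⟪y - p, U y - p⟫ ≤ ‖y - p‖ * ‖U y - p‖ := real_inner_le_norm _ _
    have h3 : ‖U y - p‖ ^ 2 ≤ ‖y - p‖ * ‖U y - p‖ := h1.trans h2
    rw [hu]
    nlinarith [norm_nonneg (U y - p), norm_nonneg (y - p)]
  -- firm nonexpansiveness of I - T at Ax, Ap
  have hIT : ‖w‖ ^ 2 ≤ ⟪A x - A p, w⟫ := by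
    have h1 := hT (A x) (A p)
    rw [hTp] at h1
    have hwe : w = (A x - A p) - (T (A x) - A p) := by rw [hw]; abel
    have e1 : ‖w‖ ^ 2 = ‖A x - A p‖ ^ 2 - 2 * ⟪A x - A p, T (A x) - A p⟫
        + ‖T (A x) - A p‖ ^ 2 := by
      rw [hwe, norm_sub_sq_real]
    have e2 : ⟪A x - A p, w⟫ = ‖A x - A p‖ ^ 2 - ⟪A x - A p, T (A x) - A p⟫ := by
      rw [hwe, inner_sub_right, real_inner_self_eq_norm_sq]
    linarith
  -- norm bound on A* w
  have hAadj : ‖A.adjoint w‖ ^ 2 ≤ L * ‖w‖ ^ 2 := by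
    have h1 : ‖A.adjoint w‖ ≤ ‖A‖ * ‖w‖ := by
      have := A.adjoint.le_opNorm w
      rwa [LinearIsometryEquiv.norm_map ContinuousLinearMap.adjoint A] at this
    have h2 : ‖A‖ * ‖A‖ ≤ L := by
      rw [← ContinuousLinearMap.norm_adjoint_comp_self A]; exact hL
    nlinarith [norm_nonneg (A.adjoint w), norm_nonneg w, norm_nonneg A]
  -- expand ‖y - p‖²
  have hyp : ‖y - p‖ ^ 2 = ‖x - p‖ ^ 2 - 2 * γ * ⟪A x - A p, w⟫
      + γ ^ 2 * ‖A.adjoint w‖ ^ 2 := by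
    have hye : y - p = (x - p) - γ • A.adjoint w := by rw [hy]; abel
    rw [hye, norm_sub_sq_real, real_inner_smul_right, norm_smul,
      ContinuousLinearMap.adjoint_inner_right, map_sub]
    simp [Real.norm_eq_abs, abs_of_pos hγ0]
    ring
  have key : ‖y - p‖ ^ 2 ≤ ‖x - p‖ ^ 2 + γ * (L * γ - 1) * ‖w‖ ^ 2 := by
    nlinarith [sq_nonneg ‖w‖]
  have h1 : ‖u - p‖ ^ 2 ≤ ‖x - p‖ ^ 2 + γ * (L * γ - 1) * ‖w‖ ^ 2 := by
    nlinarith [norm_nonneg (u - p), norm_nonneg (y - p)]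
  refine ⟨h1, ?_⟩
  have hγL : γ * L < 1 := (lt_div_iff₀ hL0).mp hγ1
  have hne : 0 ≤ γ * (1 - L * γ) * ‖w‖ ^ 2 :=
    mul_nonneg (mul_nonneg hγ0.le (by nlinarith)) (sq_nonneg _)
  have h2 : ‖u - p‖ ^ 2 ≤ ‖x - p‖ ^ 2 := by linarith [hne, h1]
  have hup := norm_nonneg (u - p)
  have hxp := norm_nonneg (x - p)
  exact (pow_le_pow_iff_left₀ hup hxp two_ne_zero).mp h2
end

section
/- Let C be a nonempty closed convex subset of a Hilbert space H and x₁ ∈ H. If {Cₙ} is a decreasing sequence of nonempty closed convex sets (Cₙ₊₁ ⊆ Cₙ ⊆ C) containing a nonempty set F, and xₙ = P_{Cₙ}x₁, then the sequence {‖xₙ - x₁‖} is nondecreasing and bounded above by ‖p - x₁‖ for every p ∈ F, hence convergent, and moreover ‖xₙ₊₁ - xₙ‖² ≤ ‖xₙ₊₁ - x₁‖² - ‖xₙ - x₁‖², so ‖xₙ₊₁ - xₙ‖ → 0. -/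
open Filter

open RealInnerProductSpace Topology

/-! Projecting `x₁` onto ever smaller sets can only move the projection further from `x₁`, and
never beyond any point of `F`, so `‖xₙ - x₁‖` increases to a finite limit. The variational
inequality for the projection onto `Cₙ`, tested at `xₙ₊₁ ∈ Cₙ`, says the angle at `xₙ` of the
triangle `x₁ xₙ xₙ₊₁` is obtuse, whence `‖xₙ₊₁ - xₙ‖² ≤ ‖xₙ₊₁ - x₁‖² - ‖xₙ - x₁‖² → 0`. -/

section InnerProductSpace

variable {E : Type*} [NormedAddCommGroup E] [InnerProductSpace ℝ E]

theorem real_inner_sub_le_zero_of_forall_norm_sub_le {K : Set E} (hK : Convex ℝ K) {u v : E}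
    (hv : v ∈ K) (hmin : ∀ w ∈ K, ‖u - v‖ ≤ ‖u - w‖) : ∀ w ∈ K, ⟪u - v, w - v⟫ ≤ 0 := by
  have : Nonempty K := ⟨⟨v, hv⟩⟩
  refine (norm_eq_iInf_iff_real_inner_le_zero hK hv).1
    (le_antisymm (le_ciInf fun w ↦ hmin w w.2) ?_)
  exact ciInf_le ⟨0, by rintro _ ⟨w, rfl⟩; positivity⟩ (⟨v, hv⟩ : K)

theorem norm_sub_sq_add_norm_sub_sq_le_of_real_inner_le_zero {u v w : E}
    (h : ⟪u - v, w - v⟫ ≤ 0) : ‖w - v‖ ^ 2 + ‖v - u‖ ^ 2 ≤ ‖w - u‖ ^ 2 := by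
  have hsplit : w - u = (w - v) + (v - u) := by abel
  have hinner : ⟪w - v, v - u⟫ = -⟪u - v, w - v⟫ := by
    rw [real_inner_comm, ← inner_neg_left, neg_sub]
  rw [hsplit, norm_add_sq_real, hinner]
  linarith

end InnerProductSpace

theorem tendsto_zero_of_sq_le_sub_succ {d b : ℕ → ℝ} {l : ℝ} (hb : Tendsto b atTop (𝓝 l))
    (hd₀ : ∀ n, 0 ≤ d n) (hd : ∀ n, d n ^ 2 ≤ b (n + 1) - b n) : Tendsto d atTop (𝓝 0) := by
  have hdiff : Tendsto (fun n ↦ b (n + 1) - b n) atTop (𝓝 0) := by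
    simpa using (hb.comp (tendsto_add_atTop_nat 1)).sub hb
  have hsq : Tendsto (fun n ↦ d n ^ 2) atTop (𝓝 0) :=
    squeeze_zero (fun n ↦ sq_nonneg _) hd hdiff
  simpa [Real.sqrt_sq (hd₀ _)] using hsq.sqrt

theorem shrinking_projection_basic_estimates_general
    (H : Type*) [NormedAddCommGroup H] [InnerProductSpace ℝ H]
    (Cs : ℕ → Set H)
    (hCs : ∀ n, (Cs n).Nonempty ∧ IsClosed (Cs n) ∧ Convex ℝ (Cs n))
    (hnest : ∀ n, Cs (n + 1) ⊆ Cs n)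
    (F : Set H) (hF : F.Nonempty) (hFCs : ∀ n, F ⊆ Cs n)
    (x₁ : H) (x : ℕ → H)
    (hxmem : ∀ n, x n ∈ Cs n)
    (hxmin : ∀ n, ∀ y ∈ Cs n, ‖x₁ - x n‖ ≤ ‖x₁ - y‖) :
    (Monotone fun n => ‖x n - x₁‖)
      ∧ (∀ p ∈ F, ∀ n, ‖x n - x₁‖ ≤ ‖p - x₁‖)
      ∧ (∃ l : ℝ, Tendsto (fun n => ‖x n - x₁‖) atTop (nhds l))
      ∧ (∀ n, ‖x (n + 1) - x n‖ ^ 2 ≤ ‖x (n + 1) - x₁‖ ^ 2 - ‖x n - x₁‖ ^ 2)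
      ∧ Tendsto (fun n => ‖x (n + 1) - x n‖) atTop (nhds 0) := by
  obtain ⟨p, hp⟩ := hF
  have hnext : ∀ n, x (n + 1) ∈ Cs n := fun n ↦ hnest n (hxmem (n + 1))
  have hmono : Monotone fun n ↦ ‖x n - x₁‖ := monotone_nat_of_le_succ fun n ↦ by
    simpa only [norm_sub_rev] using hxmin n _ (hnext n)
  have hbound : ∀ q ∈ F, ∀ n, ‖x n - x₁‖ ≤ ‖q - x₁‖ := fun q hq n ↦ by
    simpa only [norm_sub_rev] using hxmin n q (hFCs n hq)
  have hlim := tendsto_atTop_ciSup hmono ⟨‖p - x₁‖, by rintro _ ⟨n, rfl⟩; exact hbound p hp n⟩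
  have hstep : ∀ n, ‖x (n + 1) - x n‖ ^ 2 ≤ ‖x (n + 1) - x₁‖ ^ 2 - ‖x n - x₁‖ ^ 2 := fun n ↦ by
    have hobtuse := real_inner_sub_le_zero_of_forall_norm_sub_le (hCs n).2.2 (hxmem n)
      (hxmin n) _ (hnext n)
    linarith [norm_sub_sq_add_norm_sub_sq_le_of_real_inner_le_zero hobtuse]
  exact ⟨hmono, hbound, ⟨_, hlim⟩, hstep,
    tendsto_zero_of_sq_le_sub_succ (hlim.pow 2) (fun _ ↦ norm_nonneg _) hstep⟩

theorem shrinking_projection_basic_estimates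
    (H : Type*) [NormedAddCommGroup H] [InnerProductSpace ℝ H] [CompleteSpace H]
    (C : Set H) (hC : C.Nonempty) (hCcl : IsClosed C) (hCcv : Convex ℝ C)
    (Cs : ℕ → Set H)
    (hCs : ∀ n, (Cs n).Nonempty ∧ IsClosed (Cs n) ∧ Convex ℝ (Cs n))
    (hCsC : ∀ n, Cs n ⊆ C) (hnest : ∀ n, Cs (n + 1) ⊆ Cs n)
    (F : Set H) (hF : F.Nonempty) (hFCs : ∀ n, F ⊆ Cs n)
    (x₁ : H) (x : ℕ → H)
    (hxmem : ∀ n, x n ∈ Cs n)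
    (hxmin : ∀ n, ∀ y ∈ Cs n, ‖x₁ - x n‖ ≤ ‖x₁ - y‖) :
    (Monotone fun n => ‖x n - x₁‖)
      ∧ (∀ p ∈ F, ∀ n, ‖x n - x₁‖ ≤ ‖p - x₁‖)
      ∧ (∃ l : ℝ, Tendsto (fun n => ‖x n - x₁‖) atTop (nhds l))
      ∧ (∀ n, ‖x (n + 1) - x n‖ ^ 2 ≤ ‖x (n + 1) - x₁‖ ^ 2 - ‖x n - x₁‖ ^ 2)
      ∧ Tendsto (fun n => ‖x (n + 1) - x n‖) atTop (nhds 0) :=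
  shrinking_projection_basic_estimates_general H Cs hCs hnest F hF hFCs x₁ x hxmem hxmin
end
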